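/- arXiv:2006.11076 — 2 statements merged into one kernel-verified Lean document; each statement's English description precedes it below -/
import Mathlib

section
/- Let h ≥ 30 and set x = sqrt(ln h / h). If a tournament H on h vertices admits an ordering π_0 of its vertices with f(π_0) ≥ (1/2)·C(h,2) + h^{3/2}·sqrt(ln h) (equivalently, a(H) ≤ (1/2)·C(h,2) − h^{3/2}·sqrt(ln h)), then (1/2 + x)^{f(π_0)} · (1/2 − x)^{b(π_0)} > h! · 2^{−C(h,2)}, where b(π_0) = C(h,2) − f(π_0). -/
/-!
Multiplying by `2 ^ C(h,2)` and taking logarithms, with `N = C(h,2)`, `f = f(π₀)` and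
`x = √(ln h / h)`, the claim becomes `ln h! < f ln(1 + 2x) + (N - f) ln(1 - 2x)`.
The right side is `(N/2) ln(1 - 4x²) + (f - N/2) (ln(1 + 2x) - ln(1 - 2x))`. The odd part of
the logarithm series gives `ln(1 + 2x) - ln(1 - 2x) ≥ 4x`, and `f - N/2 ≥ h² x` by hypothesis,
so the second summand is at least `4 h² x² = 4 h ln h`; since `x² < 1/6` for `h ≥ 30`, the first
is above `-3 h ln h`. Hence the right side exceeds `h ln h ≥ ln h!`.
-/

open Finset

/-- Number of "forward" edges of the tournament `H` w.r.t. the ordering `π`. -/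
def fwd {h : ℕ} (H : Fin h → Fin h → Bool) (π : Equiv.Perm (Fin h)) : ℕ :=
  (Finset.univ.filter (fun e : Fin h × Fin h => H e.1 e.2 = true ∧ π e.1 < π e.2)).card

/-- Size of the automorphism group of `H`. -/
def aut {h : ℕ} (H : Fin h → Fin h → Bool) : ℕ :=
  (Finset.univ.filter (fun π : Equiv.Perm (Fin h) => ∀ u v, H (π u) (π v) = H u v)).card

/-- The typical density `d(H,p)`. -/
noncomputable def dens {h : ℕ} (H : Fin h → Fin h → Bool) (p : ℝ) : ℝ :=
  (aut H : ℝ)⁻¹ * ∑ π : Equiv.Perm (Fin h), p ^ fwd H π * (1 - p) ^ (h.choose 2 - fwd H π)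

/-- The bias polynomial `B(H,x) = d(H, x + 1/2)`. -/
noncomputable def bias {h : ℕ} (H : Fin h → Fin h → Bool) (x : ℝ) : ℝ :=
  dens H (x + 1/2)

/-- `H` is a tournament: irreflexive, and for distinct vertices exactly one direction. -/
def IsTournament {h : ℕ} (H : Fin h → Fin h → Bool) : Prop :=
  (∀ u, H u u = false) ∧ ∀ u v : Fin h, u ≠ v → H u v = !H v u

/-- `H` is transitive. -/
def IsTransitive {h : ℕ} (H : Fin h → Fin h → Bool) : Prop :=
  ∀ u v w : Fin h, H u v = true → H v w = true → H u w = true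

lemma fwd_le_choose_two {h : ℕ} (H : Fin h → Fin h → Bool) (π : Equiv.Perm (Fin h)) :
    fwd H π ≤ h.choose 2 :=
  calc fwd H π ≤ #{e : Fin h × Fin h | π e.1 < π e.2} :=
        card_le_card fun e he => by simp only [mem_filter] at he ⊢; exact ⟨he.1, he.2.2⟩
    _ = #{e ∈ univ ×ˢ univ | e.1 < e.2} := card_equiv (Equiv.prodCongr π π) (by simp)
    _ = h.choose 2 := by rw [card_product_filter_lt, card_univ, Fintype.card_fin]

lemma half_add_pow_mul_half_sub_pow (x : ℝ) {f N : ℕ} (hfN : f ≤ N) :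
    (1/2 + x) ^ f * (1/2 - x) ^ (N - f)
      = (1 + 2 * x) ^ f * (1 - 2 * x) ^ (N - f) * (2 : ℝ) ^ (-(N : ℤ)) := by
  have h2 : (2 : ℝ) ^ N = 2 ^ f * 2 ^ (N - f) := by rw [← pow_add, Nat.add_sub_cancel' hfN]
  rw [zpow_neg, zpow_natCast, h2, show (1/2 + x) = (1 + 2 * x) / 2 by ring,
    show (1/2 - x) = (1 - 2 * x) / 2 by ring, div_pow, div_pow]
  field_simp

lemma rpow_three_halves_mul_sqrt {c : ℝ} (hc : 0 < c) (L : ℝ) :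
    c ^ ((3:ℝ)/2) * Real.sqrt L = c ^ 2 * Real.sqrt (L / c) := by
  rw [show (3:ℝ)/2 = 1 + 1/2 by norm_num, Real.rpow_add hc, Real.rpow_one, ← Real.sqrt_eq_rpow,
    Real.sqrt_div' L hc.le]
  field_simp
  rw [Real.sq_sqrt hc.le]

namespace Real

lemma six_mul_log_lt_self {x : ℝ} (hx : 26 ≤ x) : 6 * log x < x := by
  have hlog : log (x / 8) ≤ x / 8 - 1 := log_le_sub_one_of_pos (by positivity)
  rw [log_div (by positivity) (by norm_num), show (8:ℝ) = 2 ^ 3 by norm_num, log_pow] at hlog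
  linarith [log_two_lt_d9]

lemma log_factorial_le (n : ℕ) : log n.factorial ≤ n * log n := by
  rw [← log_pow]
  exact log_le_log (by positivity) (by exact_mod_cast n.factorial_le_pow)

lemma two_mul_le_log_one_add_sub_log_one_sub {y : ℝ} (hy₀ : 0 ≤ y) (hy₁ : y < 1) :
    2 * y ≤ log (1 + y) - log (1 - y) := by
  simpa using le_hasSum (hasSum_log_sub_log_of_abs_lt_one (abs_lt.2 ⟨by linarith, hy₁⟩)) 0
    fun _ _ => by positivity

end Real

open Real in
lemma sq_mul_sq_lt_mul_log_one_add_add_mul_log_one_sub {x c N f : ℝ} (hx : 0 < x)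
    (hx6 : 6 * x ^ 2 < 1) (hc : c ≠ 0) (hN : N ≤ c ^ 2 / 2) (hf : c ^ 2 * x + N / 2 ≤ f) :
    c ^ 2 * x ^ 2 < f * log (1 + 2 * x) + (N - f) * log (1 - 2 * x) := by
  have h2x : 2 * x < 1 := by nlinarith
  have h4x : 0 < 1 - 4 * x ^ 2 := by nlinarith
  have hdiff : 2 * (2 * x) ≤ log (1 + 2 * x) - log (1 - 2 * x) :=
    two_mul_le_log_one_add_sub_log_one_sub (by positivity) h2x
  have hsum : log (1 + 2 * x) + log (1 - 2 * x) = log (1 - 4 * x ^ 2) := by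
    rw [← log_mul (by positivity) (by linarith)]; ring_nf
  -- `log (1 - t) ≥ 1 - 1 / (1 - t) = -t / (1 - t) > -3 t` once `t = 4 x²` is below `2 / 3`
  have hsum_lower : -(12 * x ^ 2) < log (1 - 4 * x ^ 2) := by
    refine lt_of_lt_of_le ?_ (one_sub_inv_le_log_of_pos h4x)
    rw [← one_div, sub_div' h4x.ne', lt_div_iff₀ h4x]
    nlinarith [mul_pos (pow_pos hx 2) (sub_pos.2 hx6)]
  have hsum_nonpos : log (1 - 4 * x ^ 2) ≤ 0 := log_nonpos h4x.le (by nlinarith)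
  calc c ^ 2 * x ^ 2 = c ^ 2 / 4 * -(12 * x ^ 2) + c ^ 2 * x * (2 * (2 * x)) := by ring
    _ < N / 2 * log (1 - 4 * x ^ 2)
        + (f - N / 2) * (log (1 + 2 * x) - log (1 - 2 * x)) := by
      refine add_lt_add_of_lt_of_le ?_
        (mul_le_mul (by linarith) hdiff (by positivity) (by nlinarith))
      calc c ^ 2 / 4 * -(12 * x ^ 2) < c ^ 2 / 4 * log (1 - 4 * x ^ 2) := by gcongr
        _ ≤ N / 2 * log (1 - 4 * x ^ 2) := mul_le_mul_of_nonpos_right (by linarith) hsum_nonpos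
    _ = f * log (1 + 2 * x) + (N - f) * log (1 - 2 * x) := by rw [← hsum]; ring

theorem key_inequality_pi0_general {h : ℕ} (hh : 30 ≤ h) (H : Fin h → Fin h → Bool)
    (π₀ : Equiv.Perm (Fin h))
    (hf : (1/2) * (h.choose 2 : ℝ) + (h : ℝ) ^ ((3:ℝ)/2) * Real.sqrt (Real.log h)
      ≤ (fwd H π₀ : ℝ)) :
    (1/2 + Real.sqrt (Real.log h / h)) ^ (fwd H π₀)
      * (1/2 - Real.sqrt (Real.log h / h)) ^ (h.choose 2 - fwd H π₀)
    > (h.factorial : ℝ) * (2 : ℝ) ^ (-(h.choose 2 : ℤ)) := by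
  set x := Real.sqrt (Real.log h / h)
  have hh₀ : (0 : ℝ) < h := by positivity
  have hh₃₀ : (30 : ℝ) ≤ h := by exact_mod_cast hh
  have hlog : 0 < Real.log h := Real.log_pos (by linarith)
  have hx : 0 < x := Real.sqrt_pos.2 (by positivity)
  have hx2 : x ^ 2 = Real.log h / h := Real.sq_sqrt (by positivity)
  have hx6 : 6 * x ^ 2 < 1 := by
    rw [hx2, mul_div_assoc', div_lt_one hh₀]
    exact Real.six_mul_log_lt_self (by linarith)
  have hN : (h.choose 2 : ℝ) ≤ (h : ℝ) ^ 2 / 2 := by rw [Nat.cast_choose_two]; nlinarith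
  have hfN := fwd_le_choose_two H π₀
  have hlt := sq_mul_sq_lt_mul_log_one_add_add_mul_log_one_sub (f := fwd H π₀)
    hx hx6 hh₀.ne' hN (by rw [rpow_three_halves_mul_sqrt hh₀] at hf; linarith)
  rw [hx2, ← Nat.cast_sub hfN] at hlt
  rw [gt_iff_lt, half_add_pow_mul_half_sub_pow _ hfN]
  refine mul_lt_mul_of_pos_right ?_ (by positivity)
  have hpos : 0 < 1 - 2 * x := by nlinarith
  rw [← Real.log_lt_log_iff (by positivity) (mul_pos (by positivity) (pow_pos hpos _)),
    Real.log_mul (by positivity) (pow_pos hpos _).ne', Real.log_pow, Real.log_pow]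
  calc Real.log h.factorial ≤ h * Real.log h := Real.log_factorial_le h
    _ = (h : ℝ) ^ 2 * (Real.log h / h) := by field_simp
    _ < _ := hlt

theorem key_inequality_pi0 {h : ℕ} (hh : 30 ≤ h) (H : Fin h → Fin h → Bool)
    (hH : IsTournament H) (π₀ : Equiv.Perm (Fin h))
    (hf : (1/2) * (h.choose 2 : ℝ) + (h : ℝ) ^ ((3:ℝ)/2) * Real.sqrt (Real.log h)
      ≤ (fwd H π₀ : ℝ)) :
    (1/2 + Real.sqrt (Real.log h / h)) ^ (fwd H π₀)
      * (1/2 - Real.sqrt (Real.log h / h)) ^ (h.choose 2 - fwd H π₀)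
    > (h.factorial : ℝ) * (2 : ℝ) ^ (-(h.choose 2 : ℤ)) :=
  key_inequality_pi0_general hh H π₀ hf
end

section
/- Let h ≥ 30, x = sqrt(ln h / h), and let f, b be nonnegative reals with f + b = C(h,2), f − b ≥ 2·h^{3/2}·sqrt(ln h), and b ≤ (1/2)·C(h,2). Then (1 + 2x)^{f − b} · (1 − 4x^2)^{b} > h!. In particular, (1 + 2·sqrt(ln h / h))^{2 h^{3/2} sqrt(ln h)} · (1 − 4 ln h / h)^{h^2/4} > h^h ≥ h!. -/
/-!
Write `L = log h` and `x = √(L / h)`, so that the exponent `2 h^{3/2} √L` equals `2 h² x` and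
`h L = h² x²`. Taking logarithms, the claim reduces to the one-variable inequality
`x² < 2 x log (1 + 2x) + log (1 - 4x²) / 4`, which follows from `log (1 + y) ≥ 2y / (y + 2)`
and `log y ≥ 1 - 1 / y` as soon as `x² ≤ 7/60`; and `L / h ≤ log 30 / 30 < 7/60` for `h ≥ 30`.
-/

open Real

lemma log_thirty_lt : log 30 < 7 / 2 := by
  rw [log_lt_iff_lt_exp (by norm_num)]
  have he := exp_one_gt_d9
  have hhalf := add_one_le_exp (1 / 2 : ℝ)
  calc (30 : ℝ) < 2.7182818283 ^ 3 * (1 / 2 + 1) := by norm_num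
    _ ≤ exp 1 ^ 3 * exp (1 / 2) := by gcongr
    _ = exp (7 / 2) := by rw [← exp_nat_mul, ← exp_add]; norm_num

lemma log_div_self_le_of_thirty_le {t : ℝ} (ht : 30 ≤ t) : log t / t ≤ 7 / 60 := by
  have he : exp 1 ≤ 30 := by linarith [exp_one_lt_d9]
  calc log t / t ≤ log 30 / 30 :=
        log_div_self_antitoneOn (Set.mem_Ici.2 he) (Set.mem_Ici.2 (he.trans ht)) ht
    _ ≤ 7 / 60 := by linarith [log_thirty_lt]

lemma sq_lt_two_mul_log_add_log_div_four {x : ℝ} (hx : 0 < x) (hx2 : x ^ 2 ≤ 7 / 60) :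
    x ^ 2 < 2 * x * log (1 + 2 * x) + log (1 - 4 * x ^ 2) / 4 := by
  have hpos : 0 < 1 - 4 * x ^ 2 := by linarith
  have h1 : 2 * x / (1 + x) ≤ log (1 + 2 * x) := by
    convert le_log_one_add_of_nonneg (by positivity : 0 ≤ 2 * x) using 1
    field_simp
    ring
  have h2 : 1 - (1 - 4 * x ^ 2)⁻¹ ≤ log (1 - 4 * x ^ 2) := one_sub_inv_le_log_of_pos hpos
  have hx' : x < 0.3417 := by nlinarith
  suffices x ^ 2 < 2 * x * (2 * x / (1 + x)) + (1 - (1 - 4 * x ^ 2)⁻¹) / 4 by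
    nlinarith
  have hdiff : 2 * x * (2 * x / (1 + x)) + (1 - (1 - 4 * x ^ 2)⁻¹) / 4 - x ^ 2
      = x ^ 2 * (2 - 2 * x - 12 * x ^ 2 + 4 * x ^ 3) / ((1 + x) * (1 - 4 * x ^ 2)) := by
    generalize hu : 1 - 4 * x ^ 2 = u at hpos ⊢
    field_simp
    linear_combination (-(1 + x + 12 * x ^ 2 - 4 * x ^ 3)) * hu
  -- decreasing on `[0, 0.35]`, and still positive at `√(7/60) ≈ 0.3416`
  have key : 0 < 2 - 2 * x - 12 * x ^ 2 + 4 * x ^ 3 := by nlinarith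
  rw [← sub_pos, hdiff]
  positivity

lemma rpow_three_halves_mul_sqrt_s11 {t : ℝ} (ht : 0 < t) (a : ℝ) :
    t ^ ((3 : ℝ) / 2) * √a = t ^ 2 * √(a / t) := by
  rw [show (3 : ℝ) / 2 = 1 + 1 / 2 by norm_num, rpow_add ht, rpow_one, ← sqrt_eq_rpow,
    sqrt_div' a ht.le]
  field_simp
  rw [sq_sqrt ht.le]

lemma rpow_self_lt_of_thirty_le {t : ℝ} (ht : 30 ≤ t) :
    t ^ t < (1 + 2 * √(log t / t)) ^ (2 * t ^ ((3 : ℝ) / 2) * √(log t))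
      * (1 - 4 * √(log t / t) ^ 2) ^ (t ^ 2 / 4) := by
  have ht0 : 0 < t := by linarith
  have hlog : 0 < log t := log_pos (by linarith)
  rw [mul_assoc, rpow_three_halves_mul_sqrt_s11 ht0]
  set x := √(log t / t)
  have hx0 : 0 < x := sqrt_pos.2 (by positivity)
  have hx2 : x ^ 2 = log t / t := sq_sqrt (by positivity)
  have hbase : 0 < 1 - 4 * x ^ 2 := by linarith [log_div_self_le_of_thirty_le ht]
  rw [← log_lt_log_iff (by positivity) (by positivity), log_mul (by positivity) (by positivity),
    log_rpow ht0, log_rpow (by positivity), log_rpow hbase]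
  calc t * log t = t ^ 2 * x ^ 2 := by rw [hx2]; field_simp
    _ < t ^ 2 * (2 * x * log (1 + 2 * x) + log (1 - 4 * x ^ 2) / 4) := by
        gcongr
        exact sq_lt_two_mul_log_add_log_div_four hx0 (hx2 ▸ log_div_self_le_of_thirty_le ht)
    _ = _ := by ring

theorem key_analytic_inequality {h : ℕ} (hh : 30 ≤ h) :
    (∀ f b : ℝ, 0 ≤ f → 0 ≤ b → f + b = (h.choose 2 : ℝ) →
      2 * (h : ℝ) ^ ((3:ℝ)/2) * Real.sqrt (Real.log h) ≤ f - b →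
      b ≤ (1/2) * (h.choose 2 : ℝ) →
      (1 + 2 * Real.sqrt (Real.log h / h)) ^ (f - b)
        * (1 - 4 * (Real.sqrt (Real.log h / h)) ^ 2) ^ b
      > (h.factorial : ℝ)) ∧
    ((1 + 2 * Real.sqrt (Real.log h / h)) ^ (2 * (h : ℝ) ^ ((3:ℝ)/2) * Real.sqrt (Real.log h))
        * (1 - 4 * Real.log h / h) ^ ((h : ℝ) ^ 2 / 4)
      > (h : ℝ) ^ (h : ℕ) ∧ (h : ℝ) ^ (h : ℕ) ≥ (h.factorial : ℝ)) := by
  have hr : (30 : ℝ) ≤ h := by exact_mod_cast hh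
  have hcore := rpow_self_lt_of_thirty_le hr
  rw [rpow_natCast] at hcore
  have hfact : (h.factorial : ℝ) ≤ (h : ℝ) ^ h := by exact_mod_cast Nat.factorial_le_pow h
  have hx2 : √(log h / h) ^ 2 = log h / h := sq_sqrt (by positivity)
  have hbase_eq : 1 - 4 * log h / h = 1 - 4 * √(log h / h) ^ 2 := by rw [hx2]; ring
  refine ⟨fun f b _ _ _ hfb hb => ?_, by rwa [hbase_eq], hfact⟩
  have hbase : 0 < 1 - 4 * √(log h / h) ^ 2 := by linarith [log_div_self_le_of_thirty_le hr]
  have hb' : b ≤ (h : ℝ) ^ 2 / 4 := by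
    rw [Nat.cast_choose_two] at hb
    nlinarith
  calc (h.factorial : ℝ) ≤ (h : ℝ) ^ h := hfact
    _ < _ := hcore
    _ ≤ _ := mul_le_mul
        (rpow_le_rpow_of_exponent_le (by linarith [sqrt_nonneg (log h / h)]) hfb)
        (rpow_le_rpow_of_exponent_ge hbase (by linarith [sq_nonneg √(log h / h)]) hb')
        (by positivity) (by positivity)
end
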